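/- Connection formula: let λ ∈ ℂ with λ ≠ 0 and λ^j ≠ 1 for all 1 ≤ j ≤ n. Then for every n ∈ ℕ, every a ∈ ℂ with a ≠ 0, and every x ∈ ℂ with x ≠ 0, one has 1/x^n = (1/a^n) · Σ_{k=0}^{n} (−1)^k · λ^{k(k−1)/2} · [n choose k]_λ · (x−a)_λ^k. -/
import Mathlib


/-- The λ-binomial `(x−a)_λ^k = ∏_{i=0}^{k-1} (1 − a/(λ^i x))`. -/
noncomputable def lamBinom (l a x : ℂ) (k : ℕ) : ℂ :=
  ∏ i ∈ Finset.range k, (1 - a / (l ^ i * x))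

/-- The finite q-Pochhammer symbol `(z;q)_m = ∏_{i=0}^{m-1} (1 − z q^i)`. -/
noncomputable def qPoch (z q : ℂ) (m : ℕ) : ℂ := ∏ i ∈ Finset.range m, (1 - z * q ^ i)

/-- The Gaussian binomial coefficient `[n choose k]_λ = (λ;λ)_n/((λ;λ)_k (λ;λ)_{n−k})`. -/
noncomputable def gaussBinom (l : ℂ) (n k : ℕ) : ℂ :=
  qPoch l l n / (qPoch l l k * qPoch l l (n - k))

lemma qPoch_zero' (l : ℂ) : qPoch l l 0 = 1 := by simp [qPoch]

lemma qPoch_succ' (l : ℂ) (m : ℕ) : qPoch l l (m + 1) = qPoch l l m * (1 - l ^ (m + 1)) := by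
  rw [qPoch, Finset.prod_range_succ, ← qPoch, pow_succ']

lemma qPoch_ne_zero (l : ℂ) (m : ℕ) (h : ∀ j : ℕ, 1 ≤ j → j ≤ m → l ^ j ≠ 1) :
    qPoch l l m ≠ 0 := by
  rw [qPoch]
  apply Finset.prod_ne_zero_iff.mpr
  intro i hi
  rw [Finset.mem_range] at hi
  have h1 := h (i + 1) (by omega) (by omega)
  rw [pow_succ'] at h1
  exact sub_ne_zero_of_ne fun hc => h1 hc.symm

lemma gauss_zero (l : ℂ) (n : ℕ) (h : qPoch l l n ≠ 0) : gaussBinom l n 0 = 1 := by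
  simp [gaussBinom, qPoch_zero', div_self h]

lemma gauss_self (l : ℂ) (n : ℕ) (h : qPoch l l n ≠ 0) : gaussBinom l n n = 1 := by
  simp [gaussBinom, qPoch_zero', div_self h]

lemma lamBinom_succ (l a x : ℂ) (k : ℕ) :
    lamBinom l a x (k + 1) = lamBinom l a x k * (1 - a / (l ^ k * x)) := by
  rw [lamBinom, Finset.prod_range_succ, ← lamBinom]

lemma tri_succ (k : ℕ) : (k + 1) * ((k + 1) - 1) / 2 = k * (k - 1) / 2 + k := by
  rcases k with - | j
  · rfl
  · have h2 : 2 ∣ (j + 1) * j := by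
      rcases Nat.even_or_odd j with he | ho
      · exact Dvd.dvd.mul_left he.two_dvd _
      · exact Dvd.dvd.mul_right (Odd.add_one ho).two_dvd _
    have h3 : (j + 1 + 1) * (j + 1 + 1 - 1) = (j + 1) * (j + 1 - 1) + 2 * (j + 1) := by
      simp only [Nat.add_sub_cancel]; ring
    simp only [Nat.add_sub_cancel] at *
    omega

lemma pascal (l : ℂ) (n k : ℕ) (hk1 : 1 ≤ k) (hkn : k ≤ n)
    (h : ∀ j : ℕ, 1 ≤ j → j ≤ n + 1 → l ^ j ≠ 1) :
    gaussBinom l (n + 1) k = l ^ k * gaussBinom l n k + gaussBinom l n (k - 1) := by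
  obtain ⟨m, rfl⟩ := Nat.exists_eq_add_of_le hkn
  obtain ⟨j, rfl⟩ := Nat.exists_eq_add_of_le hk1
  have hqj : qPoch l l j ≠ 0 := qPoch_ne_zero l j fun i h1 h2 => h i h1 (by omega)
  have hqj1 : qPoch l l (1 + j) ≠ 0 := qPoch_ne_zero l _ fun i h1 h2 => h i h1 (by omega)
  have hqm : qPoch l l m ≠ 0 := qPoch_ne_zero l m fun i h1 h2 => h i h1 (by omega)
  have hqm1 : qPoch l l (m + 1) ≠ 0 := qPoch_ne_zero l _ fun i h1 h2 => h i h1 (by omega)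
  have e1 : 1 + j + m + 1 - (1 + j) = m + 1 := by omega
  have e2 : 1 + j + m - (1 + j) = m := by omega
  have e3 : 1 + j - 1 = j := by omega
  have e4 : 1 + j + m - j = m + 1 := by omega
  have e5 : 1 + j = j + 1 := by omega
  have hj1 : (1 : ℂ) - l ^ (j + 1) ≠ 0 :=
    sub_ne_zero_of_ne fun hc => h (j + 1) (by omega) (by omega) hc.symm
  have hm1 : (1 : ℂ) - l ^ (m + 1) ≠ 0 :=
    sub_ne_zero_of_ne fun hc => h (m + 1) (by omega) (by omega) hc.symm
  rw [gaussBinom, gaussBinom, gaussBinom, e1, e2, e3, e4]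
  rw [show 1 + j + m + 1 = (1 + j + m) + 1 by omega, qPoch_succ' l (1 + j + m),
    qPoch_succ' l m, e5, qPoch_succ' l j]
  field_simp
  ring

lemma key_sum (l : ℂ) (hl : l ≠ 0) (a x : ℂ) (hx : x ≠ 0) :
    ∀ n : ℕ, (∀ j : ℕ, 1 ≤ j → j ≤ n → l ^ j ≠ 1) →
      ∑ k ∈ Finset.range (n + 1),
        (-1 : ℂ) ^ k * l ^ (k * (k - 1) / 2) * gaussBinom l n k * lamBinom l a x k
        = (a / x) ^ n := by
  intro n
  induction n with
  | zero =>
      intro _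
      simp [gaussBinom, qPoch_zero', lamBinom]
  | succ n ih =>
      intro h
      have hqn : qPoch l l n ≠ 0 := qPoch_ne_zero l n fun i h1 h2 => h i h1 (by omega)
      have hqn1 : qPoch l l (n + 1) ≠ 0 := qPoch_ne_zero l _ fun i h1 h2 => h i h1 h2
      set T : ℕ → ℂ := fun k => (-1 : ℂ) ^ k * l ^ (k * (k - 1) / 2) with hT
      set B : ℕ → ℂ := fun k => lamBinom l a x k with hB
      have hTsucc : ∀ k : ℕ, T (k + 1) = -(T k * l ^ k) := by
        intro k
        simp only [hT, tri_succ, pow_add, pow_succ]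
        ring
      have hBsucc : ∀ k : ℕ, B (k + 1) = B k * (1 - a / (l ^ k * x)) := fun k =>
        lamBinom_succ l a x k
      -- the summand of S_{n+1}
      set A : ℕ → ℂ := fun k => T k * l ^ k * gaussBinom l n k * B k with hA
      set H : ℕ → ℂ := fun k => T (k + 1) * gaussBinom l n k * B (k + 1) with hH
      have main : ∑ k ∈ Finset.range (n + 1 + 1), T k * gaussBinom l (n + 1) k * B k
          = ∑ k ∈ Finset.range (n + 1), A k + ∑ k ∈ Finset.range (n + 1), H k := by
        rw [Finset.sum_range_succ, Finset.sum_range_succ' _ n]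
        rw [Finset.sum_range_succ' (fun k => A k) n, Finset.sum_range_succ (fun k => H k) n]
        have h0 : T 0 * gaussBinom l (n + 1) 0 * B 0 = A 0 := by
          simp [hA, hT, hB, gauss_zero l (n + 1) hqn1, gauss_zero l n hqn, lamBinom]
        have hlast : T (n + 1) * gaussBinom l (n + 1) (n + 1) * B (n + 1) = H n := by
          simp [hH, gauss_self l (n + 1) hqn1, gauss_self l n hqn]
        have hmid : ∀ k ∈ Finset.range n,
            T (k + 1) * gaussBinom l (n + 1) (k + 1) * B (k + 1) = A (k + 1) + H k := by
          intro k hk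
          rw [Finset.mem_range] at hk
          rw [pascal l n (k + 1) (by omega) (by omega) h]
          simp only [hA, hH, Nat.add_sub_cancel]
          ring
        rw [Finset.sum_congr rfl hmid, Finset.sum_add_distrib]
        rw [h0, hlast]
        ring
      have combine : ∀ k : ℕ, A k + H k = (a / x) * (T k * gaussBinom l n k * B k) := by
        intro k
        have hlk : (l : ℂ) ^ k ≠ 0 := pow_ne_zero k hl
        simp only [hA, hH]
        rw [hTsucc k, hBsucc k]
        field_simp
        ring
      calc ∑ k ∈ Finset.range (n + 1 + 1),
            (-1 : ℂ) ^ k * l ^ (k * (k - 1) / 2) * gaussBinom l (n + 1) k * lamBinom l a x k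
          = ∑ k ∈ Finset.range (n + 1 + 1), T k * gaussBinom l (n + 1) k * B k := by
            apply Finset.sum_congr rfl; intro k _; simp only [hT, hB]
        _ = ∑ k ∈ Finset.range (n + 1), A k + ∑ k ∈ Finset.range (n + 1), H k := main
        _ = ∑ k ∈ Finset.range (n + 1), (A k + H k) := (Finset.sum_add_distrib).symm
        _ = (a / x) * ∑ k ∈ Finset.range (n + 1), T k * gaussBinom l n k * B k := by
            rw [Finset.mul_sum]; exact Finset.sum_congr rfl fun k _ => combine k
        _ = (a / x) * (a / x) ^ n := by
            rw [← ih fun j h1 h2 => h j h1 (by omega)]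
        _ = (a / x) ^ (n + 1) := by ring

/-- Connection formula:
`1/x^n = (1/a^n) Σ_{k=0}^{n} (−1)^k λ^{k(k−1)/2} [n choose k]_λ (x−a)_λ^k`. -/
theorem connection_inv_pow (l : ℂ) (hl : l ≠ 0) (n : ℕ)
    (hln : ∀ j : ℕ, 1 ≤ j → j ≤ n → l ^ j ≠ 1)
    (a : ℂ) (ha : a ≠ 0) (x : ℂ) (hx : x ≠ 0) :
    1 / x ^ n = 1 / a ^ n *
      ∑ k ∈ Finset.range (n + 1),
        (-1 : ℂ) ^ k * l ^ (k * (k - 1) / 2) * gaussBinom l n k * lamBinom l a x k := by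
  rw [key_sum l hl a x hx n hln, div_pow]
  field_simp
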